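/- Let X and Y be locally compact Hausdorff spaces and let T : C₀(X)⁺ → C₀(Y)⁺ be a bijection such that for all f, g ∈ C₀(X)⁺ one has ‖T(f+g)‖ = ‖T(f)+T(g)‖ and ‖T(f·g)‖ = ‖T(f)·T(g)‖. Define T̃ : C₀(X) → C₀(Y) by T̃(f) = T(f₊) − T(f₋). Then T̃ is an isometry: ‖T̃(f)‖ = ‖f‖ for every f ∈ C₀(X). -/

import Mathlib

open scoped ZeroAtInfty
open Filter ZeroAtInftyContinuousMap

/-- The positive part `f₊ = max (f, 0)` of a real-valued continuous function
vanishing at infinity. -/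
noncomputable def posPart {X : Type*} [TopologicalSpace X] (f : C₀(X, ℝ)) : C₀(X, ℝ) :=
  ⟨⟨fun x => max (f x) 0, (map_continuous f).max continuous_const⟩, by
    simpa using (zero_at_infty f).max
      (tendsto_const_nhds : Tendsto (fun _ : X => (0 : ℝ)) (cocompact X) (nhds 0))⟩

/-- The negative part `f₋ = max (-f, 0)`. -/
noncomputable def negPart {X : Type*} [TopologicalSpace X] (f : C₀(X, ℝ)) : C₀(X, ℝ) :=
  posPart (-f)

/-- The extension `T̃(f) = T(f₊) - T(f₋)` of a map between positive cones. -/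
noncomputable def tildeT {X Y : Type*} [TopologicalSpace X] [TopologicalSpace Y]
    (T : C₀(X, ℝ) → C₀(Y, ℝ)) (f : C₀(X, ℝ)) : C₀(Y, ℝ) :=
  T (posPart f) - T (negPart f)

/-!
For `f ≥ 0` write `N f = ‖T f‖`. Norm additivity makes `N` monotone and gives
`N (2 • f) = 2 N f`; norm multiplicativity and the C⋆-identity `‖g * g‖ = ‖g‖ ^ 2` give
`N (f * f) = N f ^ 2`. If `‖f‖ ≤ 1` then `f * f ≤ f`, so `N f ^ 2 ≤ N f` and `N f ≤ 1`.
If `‖f‖ > 1` then `min f 1` is a unit for the nonzero function `(f - 1)₊`, and injectivity of `T`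
turns this into `N (min f 1) ≥ 1`. Rescaling by powers of `2` yields `N f ≤ 2 ‖f‖` and
`‖f‖ ≤ 2 N f`; applied to the iterated squares of `f` the factor `2` becomes `2 ^ (2 ^ -j)`,
so `N f = ‖f‖`.

Since `f₊ f₋ = 0`, also `T f₊ * T f₋ = 0`, and for functions with product zero
`‖u - v‖ = max ‖u‖ ‖v‖`.
-/

theorem le_of_forall_pow_two_pow_le_two_mul {a b : ℝ} (ha : 0 ≤ a)
    (h : ∀ j : ℕ, b ^ 2 ^ j ≤ 2 * a ^ 2 ^ j) : b ≤ a := by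
  rcases ha.eq_or_lt with rfl | ha
  · simpa using h 0
  by_contra! hab
  have hr : 1 < b / a := (one_lt_div ha).2 hab
  obtain ⟨n, hn⟩ := pow_unbounded_of_one_lt 2 hr
  have hn' : (b / a) ^ 2 ^ n ≤ 2 := by
    rw [div_pow, div_le_iff₀ (by positivity)]
    exact h n
  exact (hn.trans_le (pow_le_pow_right₀ hr.le Nat.lt_two_pow_self.le)).not_ge hn'

theorem le_of_le_two_mul_of_map_mul_self {α : Type*} [Mul α] {S : Set α}
    (hS : ∀ a ∈ S, a * a ∈ S) {u v : α → ℝ} (hv : ∀ a, 0 ≤ v a)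
    (hu_mul : ∀ a ∈ S, u (a * a) = u a ^ 2) (hv_mul : ∀ a ∈ S, v (a * a) = v a ^ 2)
    (h : ∀ a ∈ S, u a ≤ 2 * v a) {a : α} (ha : a ∈ S) : u a ≤ v a := by
  have hpow : ∀ j : ℕ, ∀ a ∈ S, u a ^ 2 ^ j ≤ 2 * v a ^ 2 ^ j := by
    intro j
    induction j with
    | zero => simpa using h
    | succ j ih =>
      intro a ha
      simpa only [hu_mul a ha, hv_mul a ha, ← pow_mul, ← pow_succ'] using ih (a * a) (hS a ha)
  exact le_of_forall_pow_two_pow_le_two_mul (hv a) fun j => hpow j a ha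

namespace ZeroAtInftyContinuousMap

variable {X : Type*} [TopologicalSpace X]

theorem abs_apply_le_norm (f : C₀(X, ℝ)) (x : X) : |f x| ≤ ‖f‖ :=
  f.toBCF.norm_coe_le_norm x

theorem norm_le_iff_forall_abs_le (f : C₀(X, ℝ)) {C : ℝ} (hC : 0 ≤ C) :
    ‖f‖ ≤ C ↔ ∀ x, |f x| ≤ C :=
  f.toBCF.norm_le hC

theorem norm_le_norm_of_forall_abs_le {f g : C₀(X, ℝ)} (h : ∀ x, |f x| ≤ |g x|) :
    ‖f‖ ≤ ‖g‖ :=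
  (f.norm_le_iff_forall_abs_le (norm_nonneg g)).2 fun x => (h x).trans (g.abs_apply_le_norm x)

theorem norm_mul_self_eq (f : C₀(X, ℝ)) : ‖f * f‖ = ‖f‖ * ‖f‖ := by
  have hstar : star f = f := ext fun x => star_trivial (f x)
  simpa only [hstar] using CStarRing.norm_star_mul_self (x := f)

theorem norm_sub_eq_max_of_mul_eq_zero {u v : C₀(X, ℝ)} (huv : u * v = 0) :
    ‖u - v‖ = max ‖u‖ ‖v‖ := by
  have hpt : ∀ x, u x = 0 ∨ v x = 0 := fun x => mul_eq_zero.1 (congrArg (· x) huv)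
  refine le_antisymm ((norm_le_iff_forall_abs_le _ (le_max_of_le_left (norm_nonneg u))).2
    fun x => ?_) (max_le (norm_le_norm_of_forall_abs_le fun x => ?_)
      (norm_le_norm_of_forall_abs_le fun x => ?_)) <;>
    rcases hpt x with h | h <;> simp [h, abs_apply_le_norm]

variable {β γ : Type*} [TopologicalSpace β] [Zero β] [TopologicalSpace γ] [Zero γ]

def compLeft (φ : C(β, γ)) (hφ : φ 0 = 0) (f : C₀(X, β)) : C₀(X, γ) where
  toContinuousMap := φ.comp f
  zero_at_infty' := by simpa [hφ] using (φ.continuous.tendsto 0).comp (zero_at_infty f)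

@[simp]
theorem compLeft_apply (φ : C(β, γ)) (hφ : φ 0 = 0) (f : C₀(X, β)) (x : X) :
    compLeft φ hφ f x = φ (f x) :=
  rfl

end ZeroAtInftyContinuousMap

section PosNegPart

variable {X : Type*} [TopologicalSpace X]

theorem posPart_apply_nonneg (f : C₀(X, ℝ)) (x : X) : 0 ≤ posPart f x :=
  le_max_right _ _

theorem negPart_apply_nonneg (f : C₀(X, ℝ)) (x : X) : 0 ≤ negPart f x :=
  le_max_right _ _

theorem posPart_mul_negPart (f : C₀(X, ℝ)) : posPart f * negPart f = 0 := by
  ext x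
  change max (f x) 0 * max (-f x) 0 = 0
  rcases le_total (f x) 0 with h | h <;> simp [h]

theorem posPart_sub_negPart_eq_self (f : C₀(X, ℝ)) : posPart f - negPart f = f := by
  ext x
  change max (f x) 0 - max (-f x) 0 = f x
  rcases le_total (f x) 0 with h | h <;> simp [h]

end PosNegPart

section ConeMap

variable {X Y : Type*} [TopologicalSpace X] [TopologicalSpace Y] {T : C₀(X, ℝ) → C₀(Y, ℝ)}

def IsNormAdditiveOnCone (T : C₀(X, ℝ) → C₀(Y, ℝ)) : Prop :=
  ∀ f g : C₀(X, ℝ), (∀ x, 0 ≤ f x) → (∀ x, 0 ≤ g x) → ‖T (f + g)‖ = ‖T f + T g‖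

def IsNormMultiplicativeOnCone (T : C₀(X, ℝ) → C₀(Y, ℝ)) : Prop :=
  ∀ f g : C₀(X, ℝ), (∀ x, 0 ≤ f x) → (∀ x, 0 ≤ g x) → ‖T (f * g)‖ = ‖T f * T g‖

theorem IsNormAdditiveOnCone.map_zero (hadd : IsNormAdditiveOnCone T) : T 0 = 0 := by
  have h := hadd 0 0 (fun _ => le_rfl) (fun _ => le_rfl)
  rw [add_zero, ← two_smul ℝ, norm_smul, Real.norm_two] at h
  exact norm_eq_zero.1 (by linarith)

theorem norm_map_le_norm_map (hpos : Set.MapsTo T {f | ∀ x, 0 ≤ f x} {g | ∀ y, 0 ≤ g y})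
    (hadd : IsNormAdditiveOnCone T) {f g : C₀(X, ℝ)} (hf : ∀ x, 0 ≤ f x)
    (hfg : ∀ x, f x ≤ g x) : ‖T f‖ ≤ ‖T g‖ := by
  have hgf : ∀ x, 0 ≤ (g - f) x := fun x => sub_nonneg.2 (hfg x)
  calc ‖T f‖ ≤ ‖T f + T (g - f)‖ := norm_le_norm_of_forall_abs_le fun y => by
        have h₁ : 0 ≤ T f y := hpos hf y
        have h₂ : 0 ≤ T (g - f) y := hpos hgf y
        rw [ZeroAtInftyContinuousMap.add_apply, abs_of_nonneg h₁, abs_of_nonneg (add_nonneg h₁ h₂)]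
        linarith
    _ = ‖T g‖ := by rw [← hadd f (g - f) hf hgf, add_sub_cancel]

theorem norm_map_zpow_two_smul (hadd : IsNormAdditiveOnCone T)
    {f : C₀(X, ℝ)} (hf : ∀ x, 0 ≤ f x) (k : ℤ) :
    ‖T ((2 : ℝ) ^ k • f)‖ = 2 ^ k * ‖T f‖ := by
  have htwo : ∀ g : C₀(X, ℝ), (∀ x, 0 ≤ g x) → ‖T ((2 : ℝ) • g)‖ = 2 * ‖T g‖ := fun g hg => by
    rw [two_smul ℝ g, hadd g g hg hg, ← two_smul ℝ, norm_smul, Real.norm_two]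
  have hnonneg : ∀ k : ℤ, ∀ x, 0 ≤ ((2 : ℝ) ^ k • f) x := fun k x =>
    mul_nonneg (by positivity) (hf x)
  induction k using Int.induction_on with
  | zero => simp
  | succ k ih =>
    rw [zpow_add_one₀ two_ne_zero, mul_comm, mul_smul, htwo _ (hnonneg k), ih]
    ring
  | pred k ih =>
    have h := htwo _ (hnonneg (-k - 1))
    have h2 : (2 : ℝ) ^ (-(k : ℤ)) = 2 * 2 ^ (-(k : ℤ) - 1) := by
      rw [zpow_sub_one₀ two_ne_zero]
      ring
    rw [← mul_smul, ← h2, ih, h2] at h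
    linarith

theorem norm_map_le_one_of_norm_le_one
    (hpos : Set.MapsTo T {f | ∀ x, 0 ≤ f x} {g | ∀ y, 0 ≤ g y})
    (hadd : IsNormAdditiveOnCone T) (hmul : IsNormMultiplicativeOnCone T)
    {f : C₀(X, ℝ)} (hf : ∀ x, 0 ≤ f x) (h1 : ‖f‖ ≤ 1) : ‖T f‖ ≤ 1 := by
  have hsq : ‖T f‖ * ‖T f‖ ≤ ‖T f‖ := by
    rw [← norm_mul_self_eq, ← hmul f f hf hf]
    refine norm_map_le_norm_map hpos hadd (fun x => mul_nonneg (hf x) (hf x)) fun x => ?_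
    exact mul_le_of_le_one_right (hf x) ((le_abs_self _).trans ((abs_apply_le_norm f x).trans h1))
  nlinarith [norm_nonneg (T f)]

theorem one_le_norm_map_of_mul_eq_right
    (hmul : IsNormMultiplicativeOnCone T)
    {e u : C₀(X, ℝ)} (he : ∀ x, 0 ≤ e x) (hu : ∀ x, 0 ≤ u x) (heu : e * u = u)
    (hTu : T u ≠ 0) : 1 ≤ ‖T e‖ := by
  have h : ‖T u‖ ≤ ‖T e‖ * ‖T u‖ :=
    calc ‖T u‖ = ‖T e * T u‖ := by rw [← hmul e u he hu, heu]
      _ ≤ ‖T e‖ * ‖T u‖ := norm_mul_le _ _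
  nlinarith [norm_pos_iff.2 hTu]

theorem one_le_norm_map_of_one_lt_norm
    (hpos : Set.MapsTo T {f | ∀ x, 0 ≤ f x} {g | ∀ y, 0 ≤ g y})
    (hadd : IsNormAdditiveOnCone T) (hmul : IsNormMultiplicativeOnCone T)
    (hinj : Set.InjOn T {f | ∀ x, 0 ≤ f x})
    {f : C₀(X, ℝ)} (hf : ∀ x, 0 ≤ f x) (h1 : 1 < ‖f‖) : 1 ≤ ‖T f‖ := by
  set e := compLeft ⟨fun t : ℝ => min t 1, by fun_prop⟩ (by simp) f
  set u := compLeft ⟨fun t : ℝ => max (t - 1) 0, by fun_prop⟩ (by simp) f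
  have he : ∀ x, 0 ≤ e x := fun x => le_min (hf x) zero_le_one
  have hu : ∀ x, 0 ≤ u x := fun x => le_max_right _ _
  have heu : e * u = u := ext fun x => by
    change min (f x) 1 * max (f x - 1) 0 = max (f x - 1) 0
    rcases le_total (f x) 1 with h | h <;> simp [h]
  obtain ⟨x, hx⟩ : ∃ x, 1 < f x := by
    by_contra! h
    exact h1.not_ge ((norm_le_iff_forall_abs_le f zero_le_one).2 fun x =>
      abs_le.2 ⟨by linarith [hf x], h x⟩)
  have hTu : T u ≠ 0 := fun h => by
    have hu0 : u = 0 := hinj hu (fun _ => le_rfl) (h.trans hadd.map_zero.symm)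
    have := congrArg (· x) hu0
    simp only [u, compLeft_apply, ContinuousMap.coe_mk, ZeroAtInftyContinuousMap.zero_apply] at this
    linarith [le_max_left (f x - 1) 0]
  calc 1 ≤ ‖T e‖ := one_le_norm_map_of_mul_eq_right hmul he hu heu hTu
    _ ≤ ‖T f‖ := norm_map_le_norm_map hpos hadd he fun x => min_le_left _ _

theorem norm_map_le_zpow_of_norm_le
    (hpos : Set.MapsTo T {f | ∀ x, 0 ≤ f x} {g | ∀ y, 0 ≤ g y})
    (hadd : IsNormAdditiveOnCone T) (hmul : IsNormMultiplicativeOnCone T)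
    {f : C₀(X, ℝ)} (hf : ∀ x, 0 ≤ f x) {k : ℤ} (h : ‖f‖ ≤ 2 ^ k) : ‖T f‖ ≤ 2 ^ k := by
  have hc : (0 : ℝ) < 2 ^ k := by positivity
  have hg : ∀ x, 0 ≤ (((2 : ℝ) ^ k)⁻¹ • f) x := fun x => mul_nonneg (by positivity) (hf x)
  have hg1 : ‖((2 : ℝ) ^ k)⁻¹ • f‖ ≤ 1 := by
    rwa [norm_smul, norm_inv, Real.norm_of_nonneg hc.le, inv_mul_le_iff₀ hc, mul_one]
  calc ‖T f‖ = 2 ^ k * ‖T (((2 : ℝ) ^ k)⁻¹ • f)‖ := by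
        rw [← norm_map_zpow_two_smul hadd hg, smul_inv_smul₀ hc.ne']
    _ ≤ 2 ^ k := mul_le_of_le_one_right hc.le
        (norm_map_le_one_of_norm_le_one hpos hadd hmul hg hg1)

theorem zpow_le_norm_map_of_lt_norm
    (hpos : Set.MapsTo T {f | ∀ x, 0 ≤ f x} {g | ∀ y, 0 ≤ g y})
    (hadd : IsNormAdditiveOnCone T) (hmul : IsNormMultiplicativeOnCone T)
    (hinj : Set.InjOn T {f | ∀ x, 0 ≤ f x})
    {f : C₀(X, ℝ)} (hf : ∀ x, 0 ≤ f x) {k : ℤ} (h : 2 ^ k < ‖f‖) : 2 ^ k ≤ ‖T f‖ := by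
  have hc : (0 : ℝ) < 2 ^ k := by positivity
  have hg : ∀ x, 0 ≤ (((2 : ℝ) ^ k)⁻¹ • f) x := fun x => mul_nonneg (by positivity) (hf x)
  have hg1 : 1 < ‖((2 : ℝ) ^ k)⁻¹ • f‖ := by
    rwa [norm_smul, norm_inv, Real.norm_of_nonneg hc.le, lt_inv_mul_iff₀ hc, mul_one]
  calc (2 : ℝ) ^ k ≤ 2 ^ k * ‖T (((2 : ℝ) ^ k)⁻¹ • f)‖ := le_mul_of_one_le_right hc.le
        (one_le_norm_map_of_one_lt_norm hpos hadd hmul hinj hg hg1)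
    _ = ‖T f‖ := by rw [← norm_map_zpow_two_smul hadd hg, smul_inv_smul₀ hc.ne']

theorem norm_map_le_two_mul_norm
    (hpos : Set.MapsTo T {f | ∀ x, 0 ≤ f x} {g | ∀ y, 0 ≤ g y})
    (hadd : IsNormAdditiveOnCone T) (hmul : IsNormMultiplicativeOnCone T)
    {f : C₀(X, ℝ)} (hf : ∀ x, 0 ≤ f x) : ‖T f‖ ≤ 2 * ‖f‖ := by
  rcases (norm_nonneg f).eq_or_lt with h0 | h0
  · rw [norm_eq_zero.1 h0.symm, hadd.map_zero]
    simp
  obtain ⟨k, hk, hk'⟩ := exists_mem_Ioc_zpow h0 one_lt_two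
  calc ‖T f‖ ≤ 2 ^ (k + 1) := norm_map_le_zpow_of_norm_le hpos hadd hmul hf hk'
    _ = 2 * 2 ^ k := by rw [zpow_add_one₀ two_ne_zero, mul_comm]
    _ ≤ 2 * ‖f‖ := by linarith

theorem norm_le_two_mul_norm_map
    (hpos : Set.MapsTo T {f | ∀ x, 0 ≤ f x} {g | ∀ y, 0 ≤ g y})
    (hadd : IsNormAdditiveOnCone T) (hmul : IsNormMultiplicativeOnCone T)
    (hinj : Set.InjOn T {f | ∀ x, 0 ≤ f x})
    {f : C₀(X, ℝ)} (hf : ∀ x, 0 ≤ f x) : ‖f‖ ≤ 2 * ‖T f‖ := by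
  rcases (norm_nonneg f).eq_or_lt with h0 | h0
  · rw [← h0]
    positivity
  obtain ⟨k, hk, hk'⟩ := exists_mem_Ioc_zpow h0 one_lt_two
  calc ‖f‖ ≤ 2 ^ (k + 1) := hk'
    _ = 2 * 2 ^ k := by rw [zpow_add_one₀ two_ne_zero, mul_comm]
    _ ≤ 2 * ‖T f‖ := by linarith [zpow_le_norm_map_of_lt_norm hpos hadd hmul hinj hf hk]

theorem norm_map_eq_norm (hpos : Set.MapsTo T {f | ∀ x, 0 ≤ f x} {g | ∀ y, 0 ≤ g y})
    (hadd : IsNormAdditiveOnCone T) (hmul : IsNormMultiplicativeOnCone T)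
    (hinj : Set.InjOn T {f | ∀ x, 0 ≤ f x})
    {f : C₀(X, ℝ)} (hf : ∀ x, 0 ≤ f x) : ‖T f‖ = ‖f‖ := by
  have hS : ∀ g ∈ {g : C₀(X, ℝ) | ∀ x, 0 ≤ g x}, g * g ∈ {g : C₀(X, ℝ) | ∀ x, 0 ≤ g x} :=
    fun g hg x => mul_nonneg (hg x) (hg x)
  have hnorm_sq : ∀ g : C₀(X, ℝ), ‖g * g‖ = ‖g‖ ^ 2 := fun g => by rw [norm_mul_self_eq, sq]
  have hmap_sq : ∀ g ∈ {g : C₀(X, ℝ) | ∀ x, 0 ≤ g x}, ‖T (g * g)‖ = ‖T g‖ ^ 2 := fun g hg => by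
    rw [hmul g g hg hg, norm_mul_self_eq, sq]
  exact le_antisymm
    (le_of_le_two_mul_of_map_mul_self hS (fun _ => norm_nonneg _) hmap_sq (fun g _ => hnorm_sq g)
      (fun g hg => norm_map_le_two_mul_norm hpos hadd hmul hg) hf)
    (le_of_le_two_mul_of_map_mul_self hS (fun _ => norm_nonneg _) (fun g _ => hnorm_sq g) hmap_sq
      (fun g hg => norm_le_two_mul_norm_map hpos hadd hmul hinj hg) hf)

end ConeMap

theorem tildeT_isometry_general {X Y : Type*}
    [TopologicalSpace X]
    [TopologicalSpace Y]
    (T : C₀(X, ℝ) → C₀(Y, ℝ))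
    (hbij : Set.BijOn T {f : C₀(X, ℝ) | ∀ x, 0 ≤ f x} {g : C₀(Y, ℝ) | ∀ y, 0 ≤ g y})
    (hadd : ∀ f g : C₀(X, ℝ), (∀ x, 0 ≤ f x) → (∀ x, 0 ≤ g x) →
      ‖T (f + g)‖ = ‖T f + T g‖)
    (hmul : ∀ f g : C₀(X, ℝ), (∀ x, 0 ≤ f x) → (∀ x, 0 ≤ g x) →
      ‖T (f * g)‖ = ‖T f * T g‖) :
    ∀ f : C₀(X, ℝ), ‖tildeT T f‖ = ‖f‖ := by
  intro f
  have hp := posPart_apply_nonneg f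
  have hn := negPart_apply_nonneg f
  have hTpn : T (posPart f) * T (negPart f) = 0 := by
    rw [← norm_eq_zero, ← hmul _ _ hp hn, posPart_mul_negPart, IsNormAdditiveOnCone.map_zero hadd,
      norm_zero]
  have hiso : ∀ {g : C₀(X, ℝ)}, (∀ x, 0 ≤ g x) → ‖T g‖ = ‖g‖ :=
    norm_map_eq_norm hbij.mapsTo hadd hmul hbij.injOn
  rw [tildeT, norm_sub_eq_max_of_mul_eq_zero hTpn, hiso hp, hiso hn,
    ← norm_sub_eq_max_of_mul_eq_zero (posPart_mul_negPart f), posPart_sub_negPart_eq_self]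

/-- The extension of a ring isomorphism in norm between positive cones is an isometry. -/
theorem tildeT_isometry {X Y : Type*}
    [TopologicalSpace X] [LocallyCompactSpace X] [T2Space X]
    [TopologicalSpace Y] [LocallyCompactSpace Y] [T2Space Y]
    (T : C₀(X, ℝ) → C₀(Y, ℝ))
    (hbij : Set.BijOn T {f : C₀(X, ℝ) | ∀ x, 0 ≤ f x} {g : C₀(Y, ℝ) | ∀ y, 0 ≤ g y})
    (hadd : ∀ f g : C₀(X, ℝ), (∀ x, 0 ≤ f x) → (∀ x, 0 ≤ g x) →
      ‖T (f + g)‖ = ‖T f + T g‖)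
    (hmul : ∀ f g : C₀(X, ℝ), (∀ x, 0 ≤ f x) → (∀ x, 0 ≤ g x) →
      ‖T (f * g)‖ = ‖T f * T g‖) :
    ∀ f : C₀(X, ℝ), ‖tildeT T f‖ = ‖f‖ :=
  tildeT_isometry_general T hbij hadd hmul
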